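/- arXiv:2011.01176 — 3 statements merged into one kernel-verified Lean document; each statement's English description precedes it below -/
import Mathlib

section
/- Let α, β be homeomorphisms of a topological space X, each of order two (involutions), such that supp(α) ⊆ A ∪ α(A), supp(β) ⊆ A ∪ β(A), α(A) ⊆ B, β(A) ⊆ B \ α(A), and A ∩ B = ∅ for some subsets A, B of X. Then the commutator γ = [α, β] = αβα⁻¹β⁻¹ equals βα, and γ maps A into B, γ² maps A into B, and supp(γ) ⊆ A ∪ γ(A) ∪ γ²(A). -/
/-!
Both involutions act as "transpositions" of sets: `α` swaps `A` with `α(A)`, `β` swaps `A` with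
`β(A)`, and both are the identity elsewhere. As `A`, `α(A)`, `β(A)` are pairwise disjoint, they
satisfy the braid relation `αβα = βαβ`, like the transpositions `(1 2)` and `(1 3)`. For
involutions this turns `[α, β] = αβαβ` into `βα`, which maps `A` to `α(A)` and `α(A)` to `β(A)`.
-/

def supp {X : Type*} [TopologicalSpace X] (α : X ≃ₜ X) : Set X := closure {x | α x ≠ x}

instance homeoGroup (X : Type*) [TopologicalSpace X] : Group (X ≃ₜ X) where
  mul f g := g.trans f
  one := Homeomorph.refl X
  inv := Homeomorph.symm
  mul_assoc _ _ _ := Homeomorph.ext fun _ => rfl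
  one_mul _ := Homeomorph.ext fun _ => rfl
  mul_one _ := Homeomorph.ext fun _ => rfl
  inv_mul_cancel f := Homeomorph.ext f.symm_apply_apply

open scoped commutatorElement

theorem commutatorElement_eq_mul_of_braid {G : Type*} [Group G] {a b : G}
    (ha : a * a = 1) (hb : b * b = 1) (hab : a * b * a = b * a * b) : ⁅a, b⁆ = b * a := by
  rw [commutatorElement_def, inv_eq_of_mul_eq_one_right ha, inv_eq_of_mul_eq_one_right hb, hab,
    mul_assoc, hb, mul_one]

section Homeomorph

variable {X : Type*} [TopologicalSpace X]

theorem homeo_mul_apply (f g : X ≃ₜ X) (x : X) : (f * g) x = f (g x) := rfl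

theorem homeo_mul_image (f g : X ≃ₜ X) (s : Set X) : (f * g) '' s = f '' (g '' s) :=
  (Set.image_image f g s).symm

theorem homeo_apply_apply_of_mul_self_eq_one {f : X ≃ₜ X} (hf : f * f = 1) (x : X) :
    f (f x) = x :=
  DFunLike.congr_fun hf x

theorem apply_eq_self_of_notMem_supp {f : X ≃ₜ X} {x : X} (hx : x ∉ supp f) : f x = x := by
  by_contra h
  exact hx (subset_closure h)

theorem supp_mul_subset (f g : X ≃ₜ X) : supp (f * g) ⊆ supp f ∪ supp g := by
  rw [supp, supp, supp, ← closure_union]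
  refine closure_mono fun x hx => ?_
  by_contra h
  simp only [Set.mem_union, Set.mem_ofPred_eq, not_or, not_not] at h
  exact hx (by rw [homeo_mul_apply, h.2, h.1])

theorem image_eq_self_of_disjoint_supp {f : X ≃ₜ X} {s : Set X} (h : Disjoint s (supp f)) :
    f '' s = s :=
  (Set.image_congr fun _ hx => apply_eq_self_of_notMem_supp (Set.disjoint_left.mp h hx)).trans
    (Set.image_id' s)

theorem braid_of_supp_subset {f g : X ≃ₜ X} {A : Set X} (hf : f * f = 1) (hg : g * g = 1)
    (hsf : supp f ⊆ A ∪ f '' A) (hsg : supp g ⊆ A ∪ g '' A)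
    (hAf : Disjoint A (f '' A)) (hAg : Disjoint A (g '' A)) (hfg : Disjoint (f '' A) (g '' A)) :
    f * g * f = g * f * g := by
  have fix_f : ∀ x, x ∉ A → x ∉ f '' A → f x = x := fun x h₁ h₂ =>
    apply_eq_self_of_notMem_supp fun h => (hsf h).elim h₁ h₂
  have fix_g : ∀ x, x ∉ A → x ∉ g '' A → g x = x := fun x h₁ h₂ =>
    apply_eq_self_of_notMem_supp fun h => (hsg h).elim h₁ h₂
  have ff := homeo_apply_apply_of_mul_self_eq_one hf
  have gg := homeo_apply_apply_of_mul_self_eq_one hg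
  refine Homeomorph.ext fun x => ?_
  simp only [homeo_mul_apply]
  by_cases hxA : x ∈ A
  · have hfx : f x ∈ f '' A := Set.mem_image_of_mem f hxA
    have hgx : g x ∈ g '' A := Set.mem_image_of_mem g hxA
    rw [fix_g (f x) (Set.disjoint_right.mp hAf hfx) (Set.disjoint_left.mp hfg hfx), ff,
      fix_f (g x) (Set.disjoint_right.mp hAg hgx) (Set.disjoint_right.mp hfg hgx), gg]
  by_cases hxf : x ∈ f '' A
  · obtain ⟨a, ha, rfl⟩ := hxf
    have hga : g a ∈ g '' A := Set.mem_image_of_mem g ha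
    rw [ff, fix_g (f a) hxA (Set.disjoint_left.mp hfg ⟨a, ha, rfl⟩),
      fix_f (g a) (Set.disjoint_right.mp hAg hga) (Set.disjoint_right.mp hfg hga), ff]
  by_cases hxg : x ∈ g '' A
  · obtain ⟨a, ha, rfl⟩ := hxg
    have hfa : f a ∈ f '' A := Set.mem_image_of_mem f ha
    rw [fix_f (g a) hxA hxf, gg,
      fix_g (f a) (Set.disjoint_right.mp hAf hfa) (Set.disjoint_left.mp hfg hfa)]
  simp only [fix_f x hxA hxf, fix_g x hxA hxg]

end Homeomorph

theorem stmt5 {X : Type*} [TopologicalSpace X] (α β : X ≃ₜ X) (A B : Set X)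
    (hα2 : α * α = 1) (hβ2 : β * β = 1)
    (hsα : supp α ⊆ A ∪ α '' A) (hsβ : supp β ⊆ A ∪ β '' A)
    (hαA : α '' A ⊆ B) (hβA : β '' A ⊆ B \ α '' A)
    (hAB : A ∩ B = ∅) (γ : X ≃ₜ X) (hγ : γ = ⁅α, β⁆) :
    γ = β * α ∧ γ '' A ⊆ B ∧ γ '' (γ '' A) ⊆ B ∧
      supp γ ⊆ A ∪ γ '' A ∪ γ '' (γ '' A) := by
  have hAB' : Disjoint A B := Set.disjoint_iff_inter_eq_empty.mpr hAB
  have hAα : Disjoint A (α '' A) := hAB'.mono_right hαA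
  have hAβ : Disjoint A (β '' A) := hAB'.mono_right fun _ hx => (hβA hx).1
  have hαβ : Disjoint (α '' A) (β '' A) := (Set.subset_sdiff.mp hβA).2.symm
  have hγ_eq : γ = β * α :=
    hγ.trans (commutatorElement_eq_mul_of_braid hα2 hβ2
      (braid_of_supp_subset hα2 hβ2 hsα hsβ hAα hAβ hαβ))
  have hγA : γ '' A = α '' A := by
    rw [hγ_eq, homeo_mul_image]
    exact image_eq_self_of_disjoint_supp
      ((Set.disjoint_union_right.mpr ⟨hAα.symm, hαβ⟩).mono_right hsβ)
  have hγγA : γ '' (γ '' A) = β '' A := by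
    rw [hγA, hγ_eq, homeo_mul_image, ← homeo_mul_image α α, hα2]
    exact congrArg _ (Set.image_id' A)
  refine ⟨hγ_eq, hγA ▸ hαA, hγγA ▸ fun _ hx => (hβA hx).1, ?_⟩
  rw [hγγA, hγA, hγ_eq]
  exact (supp_mul_subset β α).trans <| Set.union_subset
    (hsβ.trans (Set.union_subset_union_left _ Set.subset_union_left))
    (hsα.trans Set.subset_union_left)
end

section
/- Let X be a compact metrizable space, M a nonempty weak*-compact set of Borel probability measures on X such that every μ ∈ M gives every singleton measure zero. Then for every ε > 0 there exists δ > 0 such that every subset A of X with diameter less than δ satisfies μ(A) < ε for all μ ∈ M. -/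
/-!
A ball of radius `r` around `x₀` that is small for `μ₀` stays small for every `μ` weakly close to
`μ₀` (portmanteau: `μ ↦ μ F` is upper semicontinuous for closed `F`), and so do the balls of
radius `< r / 2` around points `x` close to `x₀`. Hence smallness of balls is an open condition
in `(radius, measure, centre)` near radius `0`, and compactness of `M × X` makes the radius
uniform. A set of diameter `< δ` lies in a closed ball of radius `δ`.
-/

open MeasureTheory Filter Metric Topology

theorem ProbabilityMeasure.upperSemicontinuous_measure_of_isClosed {Ω : Type*}
    [MeasurableSpace Ω] [TopologicalSpace Ω] [OpensMeasurableSpace Ω] [HasOuterApproxClosed Ω]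
    {F : Set Ω} (hF : IsClosed F) :
    UpperSemicontinuous fun μ : ProbabilityMeasure Ω ↦ (μ : Measure Ω) F :=
  fun _ _ h ↦ eventually_lt_of_limsup_lt
    ((ProbabilityMeasure.limsup_measure_closed_le_of_tendsto tendsto_id hF).trans_lt h)

section MetricSpace

variable {X : Type*} [MetricSpace X] [MeasurableSpace X] [OpensMeasurableSpace X]

theorem exists_pos_measure_closedBall_lt (μ : Measure X) [IsFiniteMeasure μ] {x : X}
    {c : ENNReal} (h : μ {x} < c) : ∃ r > 0, μ (closedBall x r) < c := by
  have hlim : Tendsto (fun r ↦ μ (cthickening r {x})) (𝓝 0) (𝓝 (μ {x})) :=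
    tendsto_measure_cthickening_of_isClosed ⟨1, one_pos, measure_ne_top _ _⟩ isClosed_singleton
  obtain ⟨r, hr, hpos⟩ :=
    (((hlim.eventually_lt_const h).filter_mono nhdsWithin_le_nhds).and
      (self_mem_nhdsWithin (s := Set.Ioi (0 : ℝ)))).exists
  exact ⟨r, hpos, by rwa [← cthickening_singleton x (le_of_lt hpos)]⟩

theorem eventually_measure_closedBall_lt {μ₀ : ProbabilityMeasure X} {x₀ : X} {c : ENNReal}
    (h : (μ₀ : Measure X) {x₀} < c) :
    ∀ᶠ p : ℝ × ProbabilityMeasure X × X in 𝓝 (0, μ₀, x₀),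
      (p.2.1 : Measure X) (closedBall p.2.2 p.1) < c := by
  obtain ⟨r, hr, hball⟩ := exists_pos_measure_closedBall_lt (μ₀ : Measure X) h
  have hμ : ∀ᶠ μ : ProbabilityMeasure X in 𝓝 μ₀, (μ : Measure X) (closedBall x₀ r) < c :=
    ProbabilityMeasure.upperSemicontinuous_measure_of_isClosed isClosed_closedBall μ₀ c hball
  have hx : ball x₀ (r / 2) ∈ 𝓝 x₀ := ball_mem_nhds x₀ (half_pos hr)
  have hδ : ∀ᶠ δ : ℝ in 𝓝 0, δ < r / 2 := eventually_lt_nhds (by positivity)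
  filter_upwards [prod_mem_nhds hδ (prod_mem_nhds hμ hx)]
  rintro ⟨δ, μ, x⟩ ⟨hδ, hμ, hx⟩
  refine (measure_mono (closedBall_subset_closedBall' ?_)).trans_lt hμ
  linarith [hδ.out, mem_ball.1 hx]

theorem IsCompact.exists_pos_forall_measure_closedBall_lt [CompactSpace X]
    {M : Set (ProbabilityMeasure X)} (hM : IsCompact M) {c : ENNReal}
    (h : ∀ μ ∈ M, ∀ x, (μ : Measure X) {x} < c) :
    ∃ δ > 0, ∀ μ ∈ M, ∀ x, (μ : Measure X) (closedBall x δ) < c := by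
  have hev := (hM.prod isCompact_univ).eventually_forall_of_forall_eventually (x₀ := (0 : ℝ))
    (P := fun δ p ↦ (p.1 : Measure X) (closedBall p.2 δ) < c)
    fun ⟨μ, x⟩ hp ↦ eventually_measure_closedBall_lt (h μ hp.1 x)
  obtain ⟨δ, hδ, hpos⟩ :=
    ((hev.filter_mono nhdsWithin_le_nhds).and (self_mem_nhdsWithin (s := Set.Ioi (0 : ℝ)))).exists
  exact ⟨δ, hpos, fun μ hμ x ↦ hδ (μ, x) ⟨hμ, Set.mem_univ x⟩⟩

end MetricSpace

theorem stmt6_general {X : Type*} [MetricSpace X] [CompactSpace X]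
    [MeasurableSpace X] [BorelSpace X]
    (M : Set (ProbabilityMeasure X)) (hcpt : IsCompact M)
    (hatom : ∀ μ ∈ M, ∀ x : X, (μ : Measure X) {x} = 0) :
    ∀ ε > (0 : ℝ), ∃ δ > (0 : ℝ), ∀ A : Set X, Metric.diam A < δ →
      ∀ μ ∈ M, (μ : Measure X) A < ENNReal.ofReal ε := by
  intro ε hε
  have hpos : (0 : ENNReal) < ENNReal.ofReal ε := ENNReal.ofReal_pos.mpr hε
  obtain ⟨δ, hδ, hball⟩ :=
    hcpt.exists_pos_forall_measure_closedBall_lt fun μ hμ x ↦ (hatom μ hμ x).trans_lt hpos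
  refine ⟨δ, hδ, fun A hA μ hμ ↦ ?_⟩
  rcases A.eq_empty_or_nonempty with rfl | ⟨a, ha⟩
  · simpa using hpos
  have hsub : A ⊆ closedBall a δ := fun y hy ↦
    mem_closedBall.2 ((dist_le_diam_of_mem isBounded_of_compactSpace hy ha).trans hA.le)
  exact (measure_mono hsub).trans_lt (hball μ hμ a)

theorem stmt6 {X : Type*} [MetricSpace X] [CompactSpace X]
    [MeasurableSpace X] [BorelSpace X]
    (M : Set (ProbabilityMeasure X)) (hne : M.Nonempty) (hcpt : IsCompact M)
    (hatom : ∀ μ ∈ M, ∀ x : X, (μ : Measure X) {x} = 0) :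
    ∀ ε > (0 : ℝ), ∃ δ > (0 : ℝ), ∀ A : Set X, Metric.diam A < δ →
      ∀ μ ∈ M, (μ : Measure X) A < ENNReal.ofReal ε :=
  stmt6_general M hcpt hatom
end

section
/- Let X be a compact metric space and (Aₙ), (Bₙ) decreasing sequences of clopen sets with diam(Aₙ) < 2^{1-n}, diam(Bₙ) < 2^{1-n}, ∩ₙAₙ = {x₀}, ∩ₙBₙ = {y₀}, x₀ ∉ B₀, y₀ ∉ A₀, A₀ ∩ B₀ = ∅, and involutive homeomorphisms αₙ with αₙ(Aₙ₋₁ \ Aₙ) = Bₙ₋₁ \ Bₙ and supp(αₙ) ⊆ (Aₙ₋₁\Aₙ) ∪ (Bₙ₋₁\Bₙ). Then the map α defined by α(x₀)=y₀, α(y₀)=x₀, α = αₙ on (Aₙ₋₁\Aₙ) ∪ (Bₙ₋₁\Bₙ), and identity off A₀ ∪ B₀, is a well-defined homeomorphism of X with α² = id, α(A₀) = B₀, and supp(α) ⊆ A₀ ∪ B₀. -/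
theorem stmt17 {X : Type*} [MetricSpace X] [CompactSpace X]
    (A B : ℕ → Set X) (x₀ y₀ : X)
    (hAmono : Antitone A) (hBmono : Antitone B)
    (hAclo : ∀ n, IsClopen (A n)) (hBclo : ∀ n, IsClopen (B n))
    (hAdiam : ∀ n, Metric.diam (A n) < 2 / 2 ^ n)
    (hBdiam : ∀ n, Metric.diam (B n) < 2 / 2 ^ n)
    (hAint : ⋂ n, A n = {x₀}) (hBint : ⋂ n, B n = {y₀})
    (hx₀ : x₀ ∉ B 0) (hy₀ : y₀ ∉ A 0) (hAB : Disjoint (A 0) (B 0))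
    (αseq : ℕ → X ≃ₜ X) (hinv : ∀ n, ∀ x, αseq n (αseq n x) = x)
    (hmap : ∀ n, αseq n '' (A n \ A (n + 1)) = B n \ B (n + 1))
    (hsupp : ∀ n, supp (αseq n) ⊆ (A n \ A (n + 1)) ∪ (B n \ B (n + 1))) :
    ∃ α : X ≃ₜ X,
      α x₀ = y₀ ∧ α y₀ = x₀ ∧
      (∀ n, ∀ x ∈ (A n \ A (n + 1)) ∪ (B n \ B (n + 1)), α x = αseq n x) ∧
      (∀ x, x ∉ A 0 ∪ B 0 → α x = x) ∧
      (∀ x, α (α x) = x) ∧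
      α '' A 0 = B 0 ∧
      supp α ⊆ A 0 ∪ B 0 := by
  classical
  set C : ℕ → Set X := fun n => (A n \ A (n + 1)) ∪ (B n \ B (n + 1)) with hCdef
  have hA0 : ∀ n, A n ⊆ A 0 := fun n => hAmono (Nat.zero_le n)
  have hB0 : ∀ n, B n ⊆ B 0 := fun n => hBmono (Nat.zero_le n)
  have hdAB : ∀ {x : X} {n m : ℕ}, x ∈ A n → x ∈ B m → False := fun hx hy =>
    Set.disjoint_left.mp hAB (hA0 _ hx) (hB0 _ hy)
  have hx0A : ∀ n, x₀ ∈ A n := by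
    intro n
    have : x₀ ∈ ⋂ n, A n := hAint.symm ▸ Set.mem_singleton x₀
    exact Set.mem_iInter.mp this n
  have hy0B : ∀ n, y₀ ∈ B n := by
    intro n
    have : y₀ ∈ ⋂ n, B n := hBint.symm ▸ Set.mem_singleton y₀
    exact Set.mem_iInter.mp this n
  have hxy : x₀ ≠ y₀ := fun h => hx₀ (h ▸ hy0B 0)
  -- uniqueness of the index
  have huniq : ∀ n m (x : X), x ∈ C n → x ∈ C m → n = m := by
    have key : ∀ n m (x : X), n < m → x ∈ C n → x ∈ C m → False := by
      intro n m x hnm h1 h2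
      have hm : x ∈ A m ∪ B m := by
        rcases h2 with h | h
        · exact Or.inl h.1
        · exact Or.inr h.1
      have hsubA : A m ⊆ A (n + 1) := hAmono hnm
      have hsubB : B m ⊆ B (n + 1) := hBmono hnm
      rcases h1 with h | h
      · rcases hm with hm | hm
        · exact h.2 (hsubA hm)
        · exact hdAB h.1 hm
      · rcases hm with hm | hm
        · exact hdAB hm h.1
        · exact h.2 (hsubB hm)
    intro n m x h1 h2
    rcases lt_trichotomy n m with h | h | h
    · exact absurd (key n m x h h1 h2) (fun h => h)
    · exact h
    · exact absurd (key m n x h h2 h1) (fun h => h)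
  -- the map
  let f : X → X := fun x =>
    if hx : ∃ n, x ∈ C n then αseq (Nat.find hx) x
    else if x = x₀ then y₀ else if x = y₀ then x₀ else x
  have hfC : ∀ n (x : X), x ∈ C n → f x = αseq n x := by
    intro n x hx
    have hex : ∃ n, x ∈ C n := ⟨n, hx⟩
    have : Nat.find hex = n := huniq _ _ x (Nat.find_spec hex) hx
    simp only [f, dif_pos hex, this]
  have hx0C : ∀ n, x₀ ∉ C n := by
    intro n h
    rcases h with h | h
    · exact h.2 (hx0A (n + 1))
    · exact hx₀ (hB0 n h.1)
  have hy0C : ∀ n, y₀ ∉ C n := by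
    intro n h
    rcases h with h | h
    · exact hy₀ (hA0 n h.1)
    · exact h.2 (hy0B (n + 1))
  have hfx0 : f x₀ = y₀ := by
    have hex : ¬∃ n, x₀ ∈ C n := fun ⟨n, h⟩ => hx0C n h
    simp only [f, dif_neg hex, if_pos rfl, if_true]
  have hfy0 : f y₀ = x₀ := by
    have hex : ¬∃ n, y₀ ∈ C n := fun ⟨n, h⟩ => hy0C n h
    simp only [f, dif_neg hex, if_neg (Ne.symm hxy), if_pos rfl, if_true]
  have hfid : ∀ x, x ∉ A 0 ∪ B 0 → f x = x := by
    intro x hx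
    have hex : ¬∃ n, x ∈ C n := by
      rintro ⟨n, h | h⟩
      · exact hx (Or.inl (hA0 n h.1))
      · exact hx (Or.inr (hB0 n h.1))
    have h1 : x ≠ x₀ := fun h => hx (Or.inl (h ▸ hx0A 0))
    have h2 : x ≠ y₀ := fun h => hx (Or.inr (h ▸ hy0B 0))
    simp only [f, dif_neg hex, if_neg h1, if_neg h2]
  -- mapping properties on the rings
  have hCA : ∀ n (x : X), x ∈ A n \ A (n + 1) → f x ∈ B n \ B (n + 1) := by
    intro n x hx
    rw [hfC n x (Or.inl hx)]
    exact (hmap n) ▸ Set.mem_image_of_mem _ hx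
  have hCB : ∀ n (x : X), x ∈ B n \ B (n + 1) → f x ∈ A n \ A (n + 1) := by
    intro n x hx
    rw [hfC n x (Or.inr hx)]
    have : x ∈ αseq n '' (A n \ A (n + 1)) := (hmap n) ▸ hx
    obtain ⟨w, hw, hwx⟩ := this
    have : αseq n x = w := by rw [← hwx, hinv]
    rw [this]; exact hw
  have hCC : ∀ n (x : X), x ∈ C n → f x ∈ C n := by
    intro n x hx
    rcases hx with h | h
    · exact Or.inr (hCA n x h)
    · exact Or.inl (hCB n x h)
  have hff : ∀ x, f (f x) = x := by
    intro x
    by_cases hex : ∃ n, x ∈ C n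
    · obtain ⟨n, hn⟩ := hex
      rw [hfC n (f x) (hCC n x hn), hfC n x hn, hinv]
    · by_cases h1 : x = x₀
      · rw [h1, hfx0, hfy0]
      · by_cases h2 : x = y₀
        · rw [h2, hfy0, hfx0]
        · have hfx : f x = x := by
            simp only [f, dif_neg hex, if_neg h1, if_neg h2]
          rw [hfx, hfx]
  -- rank lemma
  have hrank : ∀ n (x : X), x ∈ A n → x ≠ x₀ → ∃ m, n ≤ m ∧ x ∈ A m \ A (m + 1) := by
    intro n x hx hne
    have hne' : ∃ k, x ∉ A k := by
      by_contra h
      push_neg at h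
      have : x ∈ ⋂ k, A k := Set.mem_iInter.mpr h
      rw [hAint] at this
      exact hne this
    set k₀ := Nat.find hne' with hk₀
    have hk0 : x ∉ A k₀ := Nat.find_spec hne'
    have hkn : n < k₀ := by
      by_contra h
      push_neg at h
      exact hk0 (hAmono h hx)
    refine ⟨k₀ - 1, by omega, ?_, ?_⟩
    · by_contra h
      exact absurd (Nat.find_min hne' (by omega : k₀ - 1 < k₀)) (fun h' => h' h)
    · have : k₀ - 1 + 1 = k₀ := by omega
      rw [this]; exact hk0
  have hrankB : ∀ n (x : X), x ∈ B n → x ≠ y₀ → ∃ m, n ≤ m ∧ x ∈ B m \ B (m + 1) := by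
    intro n x hx hne
    have hne' : ∃ k, x ∉ B k := by
      by_contra h
      push_neg at h
      have : x ∈ ⋂ k, B k := Set.mem_iInter.mpr h
      rw [hBint] at this
      exact hne this
    set k₀ := Nat.find hne' with hk₀
    have hk0 : x ∉ B k₀ := Nat.find_spec hne'
    have hkn : n < k₀ := by
      by_contra h
      push_neg at h
      exact hk0 (hBmono h hx)
    refine ⟨k₀ - 1, by omega, ?_, ?_⟩
    · by_contra h
      exact absurd (Nat.find_min hne' (by omega : k₀ - 1 < k₀)) (fun h' => h' h)
    · have : k₀ - 1 + 1 = k₀ := by omega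
      rw [this]; exact hk0
  have hfA : ∀ n (x : X), x ∈ A n → f x ∈ B n := by
    intro n x hx
    by_cases h : x = x₀
    · rw [h, hfx0]; exact hy0B n
    · obtain ⟨m, hnm, hm⟩ := hrank n x hx h
      exact hBmono hnm (hCA m x hm).1
  have hfB : ∀ n (x : X), x ∈ B n → f x ∈ A n := by
    intro n x hx
    by_cases h : x = y₀
    · rw [h, hfy0]; exact hx0A n
    · obtain ⟨m, hnm, hm⟩ := hrankB n x hx h
      exact hAmono hnm (hCB m x hm).1
  -- small sets lemma
  have hsmall : ∀ ε : ℝ, 0 < ε → ∃ n : ℕ, 2 / 2 ^ n < ε := by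
    intro ε hε
    obtain ⟨n, hn⟩ := exists_pow_lt_of_lt_one (half_pos hε) (by norm_num : (1 : ℝ) / 2 < 1)
    refine ⟨n, ?_⟩
    have : (2 : ℝ) / 2 ^ n = 2 * (1 / 2) ^ n := by
      rw [one_div, inv_pow]; ring
    rw [this]
    linarith
  -- continuity
  have hCclo : ∀ n, IsClopen (C n) :=
    fun n => (((hAclo n).diff (hAclo (n + 1))).union ((hBclo n).diff (hBclo (n + 1))))
  have hcont : Continuous f := by
    rw [continuous_iff_continuousAt]
    intro x
    by_cases hex : ∃ n, x ∈ C n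
    · obtain ⟨n, hn⟩ := hex
      have hmem : C n ∈ nhds x := (hCclo n).2.mem_nhds hn
      have heq : f =ᶠ[nhds x] (αseq n : X → X) :=
        Filter.eventuallyEq_of_mem hmem (fun y hy => hfC n y hy)
      exact ((αseq n).continuous.continuousAt).congr heq.symm
    · by_cases h1 : x = x₀
      · subst h1
        rw [ContinuousAt, hfx0, Metric.tendsto_nhds]
        intro ε hε
        obtain ⟨n, hn⟩ := hsmall ε hε
        filter_upwards [(hAclo n).2.mem_nhds (hx0A n)] with z hz
        have hz' : f z ∈ B n := hfA n z hz
        calc dist (f z) y₀ ≤ Metric.diam (B n) :=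
              Metric.dist_le_diam_of_mem Metric.isBounded_of_compactSpace hz' (hy0B n)
          _ < 2 / 2 ^ n := hBdiam n
          _ < ε := hn
      · by_cases h2 : x = y₀
        · subst h2
          rw [ContinuousAt, hfy0, Metric.tendsto_nhds]
          intro ε hε
          obtain ⟨n, hn⟩ := hsmall ε hε
          filter_upwards [(hBclo n).2.mem_nhds (hy0B n)] with z hz
          have hz' : f z ∈ A n := hfB n z hz
          calc dist (f z) x₀ ≤ Metric.diam (A n) :=
                Metric.dist_le_diam_of_mem Metric.isBounded_of_compactSpace hz' (hx0A n)
            _ < 2 / 2 ^ n := hAdiam n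
            _ < ε := hn
        · have hout : x ∉ A 0 ∪ B 0 := by
            rintro (h | h)
            · obtain ⟨m, _, hm⟩ := hrank 0 x h h1
              exact hex ⟨m, Or.inl hm⟩
            · obtain ⟨m, _, hm⟩ := hrankB 0 x h h2
              exact hex ⟨m, Or.inr hm⟩
          have hopen : IsOpen ((A 0 ∪ B 0)ᶜ) :=
            (((hAclo 0).1.union (hBclo 0).1)).isOpen_compl
          have hmem : (A 0 ∪ B 0)ᶜ ∈ nhds x := hopen.mem_nhds hout
          have heq : f =ᶠ[nhds x] id :=
            Filter.eventuallyEq_of_mem hmem (fun y hy => hfid y hy)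
          exact continuousAt_id.congr heq.symm
  -- build the homeomorphism
  let e : X ≃ X := ⟨f, f, hff, hff⟩
  let α : X ≃ₜ X := Continuous.homeoOfEquivCompactToT2 (f := e) hcont
  have hα : ∀ x, α x = f x := fun x => rfl
  refine ⟨α, ?_, ?_, ?_, ?_, ?_, ?_, ?_⟩
  · rw [hα]; exact hfx0
  · rw [hα]; exact hfy0
  · intro n x hx; rw [hα]; exact hfC n x hx
  · intro x hx; rw [hα]; exact hfid x hx
  · intro x; rw [hα, hα]; exact hff x
  · apply Set.Subset.antisymm
    · rintro y ⟨x, hx, rfl⟩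
      exact hfA 0 x hx
    · intro y hy
      exact ⟨f y, hfB 0 y hy, hff y⟩
  · apply closure_minimal
    · intro x hx
      by_contra h
      exact hx (hfid x h)
    · exact ((hAclo 0).1.union (hBclo 0).1)
end
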